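/- Let m, n be positive integers, let M : Fin m → Fin m → ℝ be a contact matrix, N : Fin m → ℝ a population vector with N k > 0 for all k, and let I : Fin n → Finset (Fin m) be a partition of Fin m into n nonempty age bins (the sets I i are pairwise disjoint and their union is all of Fin m). Define the aggregated population W i = Σ_{k ∈ I i} N k and the aggregated contact matrix μ i j = (1 / W i) * Σ_{k ∈ I i} Σ_{l ∈ I j} M k l * N k. If M satisfies the reciprocity condition M k l * N k = M l k * N l for all k, l, then the aggregated matrix μ satisfies the reciprocity condition μ i j * W i = μ j i * W j for all i, j. -/
import Mathlib

theorem aggregated_contact_matrix_reciprocity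
    (m n : ℕ) (hm : 0 < m) (hn : 0 < n)
    (M : Fin m → Fin m → ℝ) (N : Fin m → ℝ)
    (hN : ∀ k, 0 < N k)
    (I : Fin n → Finset (Fin m))
    (hne : ∀ i, (I i).Nonempty)
    (hdisj : ∀ i j : Fin n, i ≠ j → Disjoint (I i) (I j))
    (hcover : ∀ k : Fin m, ∃ i : Fin n, k ∈ I i)
    (W : Fin n → ℝ) (hW : ∀ i, W i = ∑ k ∈ I i, N k)
    (μ : Fin n → Fin n → ℝ)
    (hμ : ∀ i j, μ i j = (1 / W i) * ∑ k ∈ I i, ∑ l ∈ I j, M k l * N k)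
    (hrec : ∀ k l : Fin m, M k l * N k = M l k * N l) :
    ∀ i j : Fin n, μ i j * W i = μ j i * W j := by
  have hWpos : ∀ i, 0 < W i := by
    intro i
    rw [hW i]
    exact Finset.sum_pos (fun k _ => hN k) (hne i)
  intro i j
  have h1 : ∀ a b : Fin n, μ a b * W a = ∑ k ∈ I a, ∑ l ∈ I b, M k l * N k := by
    intro a b
    rw [hμ a b, one_div, mul_comm, ← mul_assoc, mul_inv_cancel₀ (hWpos a).ne', one_mul]
  rw [h1, h1, Finset.sum_comm]
  exact Finset.sum_congr rfl fun l _ => Finset.sum_congr rfl fun k _ => hrec k l
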